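/- Let f be holomorphic on the open unit disc D ⊂ ℂ with ∫_D |f|² dA < ∞ (where dA is Lebesgue area measure). Then for every z ∈ D, f(z) = (1/π) ∫_D f(w) / (1 − z·conj(w))² dA(w). -/

import Mathlib

/-!
On a disc of radius `r < 1` expand `f = ∑ aₙ wⁿ` and `(1 - z w̄)⁻² = ∑ (n + 1) zⁿ w̄ⁿ`. The
monomials `wᵏ w̄ⁿ` are orthogonal on discs centred at `0` (rotation invariance) and
`∫_{|w|<r} |w|²ⁿ = π r²ⁿ⁺² / (n + 1)`, so termwise integration gives
`∫_{|w|<r} f(w) (1 - z w̄)⁻² = π r² f(z r²)`. Let `r → 1`: the left side converges because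
`f ∈ L² ⊆ L¹` on the disc and the kernel is bounded for fixed `z`.
-/

open MeasureTheory Metric Complex Set Filter
open scoped NNReal ENNReal Topology ComplexConjugate Real

section SetIntegral

variable {α E : Type*} [MeasurableSpace α] [NormedAddCommGroup E] [NormedSpace ℝ E]

theorem hasSum_setIntegral_of_norm_le_summable {μ : Measure α} {s : Set α}
    (hs : MeasurableSet s) (hμs : μ s ≠ ∞) {F : ℕ → α → E} {f : α → E} {c : ℕ → ℝ}
    (hF : ∀ n, AEStronglyMeasurable (F n) (μ.restrict s)) (hFc : ∀ n, ∀ x ∈ s, ‖F n x‖ ≤ c n)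
    (hc : Summable c) (hf : ∀ x ∈ s, HasSum (fun n => F n x) (f x)) :
    HasSum (fun n => ∫ x in s, F n x ∂μ) (∫ x in s, f x ∂μ) :=
  have : IsFiniteMeasure (μ.restrict s) := isFiniteMeasure_restrict.2 hμs
  hasSum_integral_of_dominated_convergence (fun n _ => c n) hF
    (fun n => (ae_restrict_iff' hs).2 (ae_of_all _ (hFc n))) (ae_of_all _ fun _ => hc)
    (integrable_const _) ((ae_restrict_iff' hs).2 (ae_of_all _ hf))

theorem tendsto_setIntegral_ball_nhdsLT {X : Type*} [PseudoMetricSpace X] [MeasurableSpace X]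
    [OpensMeasurableSpace X] {μ : Measure X} {f : X → E} {x : X} {R : ℝ}
    (hf : IntegrableOn f (ball x R) μ) :
    Tendsto (fun r => ∫ y in ball x r, f y ∂μ) (𝓝[<] R) (𝓝 (∫ y in ball x R, f y ∂μ)) := by
  have hrestrict : ∀ᶠ r in 𝓝[<] R,
      ∫ y in ball x r, f y ∂μ = ∫ y in ball x R, (ball x r).indicator f y ∂μ :=
    eventually_nhdsWithin_of_forall fun r (hr : r < R) => by
      rw [setIntegral_indicator measurableSet_ball, inter_eq_right.2 (ball_subset_ball hr.le)]
  refine (tendsto_integral_filter_of_dominated_convergence (fun y => ‖f y‖)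
    (.of_forall fun r => hf.aestronglyMeasurable.indicator measurableSet_ball)
    (.of_forall fun r => ae_of_all _ fun y => norm_indicator_le_norm_self f y) hf.norm
    ?_).congr' (hrestrict.mono fun r hr => hr.symm)
  filter_upwards [ae_restrict_mem measurableSet_ball] with y hy
  refine tendsto_const_nhds.congr' ?_
  filter_upwards [Ioo_mem_nhdsLT (mem_ball.1 hy)] with r hr
  exact (indicator_of_mem (mem_ball.2 hr.1) f).symm

end SetIntegral

theorem hasSum_add_one_mul_geometric_of_norm_lt_one {𝕜 : Type*} [NormedDivisionRing 𝕜] {x : 𝕜}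
    (hx : ‖x‖ < 1) : HasSum (fun n : ℕ => ((n : 𝕜) + 1) * x ^ n) (1 / (1 - x) ^ 2) := by
  simpa using hasSum_choose_mul_geometric_of_norm_lt_one 1 hx

theorem mem_eball_zero_of_norm_le {E : Type*} [NormedAddCommGroup E] {w : E} {r : ℝ≥0}
    {R : ℝ≥0∞} (hw : ‖w‖ ≤ r) (hr : (r : ℝ≥0∞) < R) : w ∈ eball 0 R := by
  rw [mem_eball, edist_zero_right, ← ofReal_norm]
  exact (ENNReal.ofReal_le_of_le_toReal (by simpa using hw)).trans_lt hr

theorem integral_ball_comp_mul_circle (g : ℂ → ℂ) (r : ℝ) (u : Circle) :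
    ∫ w in ball (0 : ℂ) r, g (u * w) = ∫ w in ball (0 : ℂ) r, g w := by
  have hpre : rotation u ⁻¹' ball (0 : ℂ) r = ball 0 r := by
    ext w
    simp only [mem_preimage, rotation_apply, mem_ball_zero_iff, norm_mul, Circle.norm_coe,
      one_mul]
  simpa [hpre, rotation_apply] using (rotation u).measurePreserving.setIntegral_preimage_emb
    (rotation u).toHomeomorph.measurableEmbedding g (ball 0 r)

theorem integral_ball_pow_mul_conj_pow_of_ne {k n : ℕ} (hkn : k ≠ n) (r : ℝ) :
    ∫ w in ball (0 : ℂ) r, w ^ k * conj w ^ n = 0 := by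
  have hkn' : ((k : ℂ) - n) ≠ 0 := sub_ne_zero.2 (by exact_mod_cast hkn)
  set u : Circle := Circle.exp (π / (k - n))
  -- rotating by `u` multiplies the integrand by `u ^ k * conj u ^ n = exp (π i) = -1`
  have hu : (u : ℂ) ^ k * conj (u : ℂ) ^ n = -1 := by
    rw [Circle.coe_exp, ← Complex.exp_conj, ← Complex.exp_nat_mul, ← Complex.exp_nat_mul,
      ← Complex.exp_add, ← Complex.exp_pi_mul_I]
    congr 1
    simp only [map_mul, conj_ofReal, conj_I]
    push_cast
    field_simp
    ring
  have h := integral_ball_comp_mul_circle (fun w => w ^ k * conj w ^ n) r u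
  simp only [map_mul, mul_pow] at h
  rw [show (fun w : ℂ => (u : ℂ) ^ k * w ^ k * (conj (u : ℂ) ^ n * conj w ^ n))
      = fun w => -(w ^ k * conj w ^ n) by ext w; linear_combination (w ^ k * conj w ^ n) * hu,
    integral_neg] at h
  linear_combination -h / 2

theorem integral_ball_norm_pow (k : ℕ) {r : ℝ} (hr : 0 ≤ r) :
    ∫ w in ball (0 : ℂ) r, ‖w‖ ^ k = 2 * π * r ^ (k + 2) / (k + 2) := by
  have hball : (ball (0 : ℂ) r).indicator (fun w => ‖w‖ ^ k)
      = fun w => (Iio r).indicator (· ^ k) ‖w‖ := by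
    ext w
    by_cases hw : ‖w‖ < r <;> simp [indicator, hw]
  have hradial : ∀ y : ℝ, y ^ (2 - 1) • (Iio r).indicator (· ^ k) y
      = (Iio r).indicator (· ^ (k + 1)) y := by
    intro y
    by_cases hy : y < r <;> simp [indicator, hy, pow_succ, mul_comm]
  have hvol : volume.real (ball (0 : ℂ) 1) = π := by
    simp [Measure.real]
  rw [← integral_indicator measurableSet_ball, hball, integral_fun_norm_addHaar,
    Complex.finrank_real_complex, hvol]
  simp only [hradial]
  rw [setIntegral_indicator measurableSet_Iio, Ioi_inter_Iio, ← integral_Ioc_eq_integral_Ioo,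
    ← intervalIntegral.integral_of_le hr, integral_pow]
  simp only [nsmul_eq_mul, smul_eq_mul]
  push_cast
  field_simp
  ring

theorem integral_ball_pow_mul_conj_pow (k n : ℕ) {r : ℝ} (hr : 0 ≤ r) :
    ∫ w in ball (0 : ℂ) r, w ^ k * conj w ^ n
      = if k = n then (π : ℂ) * r ^ (2 * n + 2) / (n + 1) else 0 := by
  split_ifs with hkn
  · subst hkn
    have hnorm : ∀ w : ℂ, w ^ k * conj w ^ k = ((‖w‖ ^ (2 * k) : ℝ) : ℂ) := fun w => by
      rw [← mul_pow, mul_conj, normSq_eq_norm_sq, pow_mul]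
      push_cast
      rfl
    simp only [hnorm]
    rw [integral_complex_ofReal, integral_ball_norm_pow _ hr]
    push_cast
    field_simp
  · exact integral_ball_pow_mul_conj_pow_of_ne hkn r

namespace HasFPowerSeriesOnBall

variable {f : ℂ → ℂ} {p : FormalMultilinearSeries ℂ ℂ ℂ} {R : ℝ≥0∞}

theorem hasSum_coeff_mul_pow (hp : HasFPowerSeriesOnBall f p 0 R) {w : ℂ}
    (hw : w ∈ eball 0 R) : HasSum (fun k => p.coeff k * w ^ k) (f w) := by
  simpa [FormalMultilinearSeries.apply_eq_pow_smul_coeff, mul_comm] using hp.hasSum hw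

theorem integral_ball_mul_conj_pow (hp : HasFPowerSeriesOnBall f p 0 R) {r : ℝ≥0}
    (hr : (r : ℝ≥0∞) < R) (n : ℕ) :
    ∫ w in ball (0 : ℂ) r, f w * conj w ^ n = p.coeff n * (π * r ^ (2 * n + 2) / (n + 1)) := by
  have hsum : HasSum (fun k => ∫ w in ball (0 : ℂ) r, p.coeff k * (w ^ k * conj w ^ n))
      (∫ w in ball (0 : ℂ) r, f w * conj w ^ n) := by
    refine hasSum_setIntegral_of_norm_le_summable measurableSet_ball measure_ball_lt_top.ne
      (fun k => (by fun_prop : Continuous _).aestronglyMeasurable)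
      (c := fun k => ‖p.coeff k‖ * r ^ k * r ^ n) (fun k w hw => ?_) ?_ (fun w hw => ?_)
    · have hw : ‖w‖ ≤ r := (mem_ball_zero_iff.1 hw).le
      simp only [norm_mul, norm_pow, RCLike.norm_conj, ← mul_assoc]
      gcongr
    · simpa [FormalMultilinearSeries.norm_apply_eq_norm_coef]
        using (p.summable_norm_mul_pow (hr.trans_le hp.r_le)).mul_right ((r : ℝ) ^ n)
    · have hw := mem_eball_zero_of_norm_le (mem_ball_zero_iff.1 hw).le hr
      simpa only [mul_assoc] using (hp.hasSum_coeff_mul_pow hw).mul_right (conj w ^ n)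
  simp only [integral_const_mul, integral_ball_pow_mul_conj_pow _ _ r.coe_nonneg, mul_ite,
    mul_zero] at hsum
  rw [hsum.unique (hasSum_single n fun k hk => if_neg hk), if_pos rfl]

theorem integral_ball_div_one_sub_mul_conj_sq (hp : HasFPowerSeriesOnBall f p 0 R) {r : ℝ≥0}
    (hr : (r : ℝ≥0∞) < R) {z : ℂ} (hz : ‖z‖ * r < 1) :
    ∫ w in ball (0 : ℂ) r, f w / (1 - z * conj w) ^ 2 = π * r ^ 2 * f (z * r ^ 2) := by
  have hcont : ContinuousOn f (closedBall 0 r) :=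
    hp.continuousOn.mono fun w hw => mem_eball_zero_of_norm_le (mem_closedBall_zero_iff.1 hw) hr
  obtain ⟨C, hC⟩ := (isCompact_closedBall (0 : ℂ) r).exists_bound_of_continuousOn hcont
  have hzr : ‖‖z‖ * (r : ℝ)‖ < 1 := by rwa [Real.norm_of_nonneg (by positivity)]
  have hsum : HasSum
      (fun n : ℕ => ∫ w in ball (0 : ℂ) r, ((n : ℂ) + 1) * z ^ n * (f w * conj w ^ n))
      (∫ w in ball (0 : ℂ) r, f w / (1 - z * conj w) ^ 2) := by
    refine hasSum_setIntegral_of_norm_le_summable measurableSet_ball measure_ball_lt_top.ne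
      (fun n => (((hcont.mono ball_subset_closedBall).aestronglyMeasurable
        measurableSet_ball).mul (continuous_conj.pow n).aestronglyMeasurable).const_mul _)
      (c := fun n => ((n : ℝ) + 1) * (‖z‖ * r) ^ n * C) (fun n w hw => ?_)
      ((hasSum_add_one_mul_geometric_of_norm_lt_one hzr).summable.mul_right C) (fun w hw => ?_)
    · have hfw : ‖f w‖ ≤ C := hC w (ball_subset_closedBall hw)
      have hw : ‖w‖ ≤ r := (mem_ball_zero_iff.1 hw).le
      have hn : ‖(n : ℂ) + 1‖ = n + 1 := by exact_mod_cast Complex.norm_natCast (n + 1)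
      have hC0 : 0 ≤ C := (norm_nonneg _).trans hfw
      calc ‖((n : ℂ) + 1) * z ^ n * (f w * conj w ^ n)‖
          = (n + 1) * ‖z‖ ^ n * (‖f w‖ * ‖w‖ ^ n) := by
            simp only [norm_mul, norm_pow, RCLike.norm_conj, hn]
        _ ≤ (n + 1) * ‖z‖ ^ n * (C * r ^ n) := by gcongr
        _ = (n + 1) * (‖z‖ * r) ^ n * C := by ring
    · have hx : ‖z * conj w‖ < 1 := by
        rw [norm_mul, RCLike.norm_conj]
        exact (mul_le_mul_of_nonneg_left (mem_ball_zero_iff.1 hw).le (norm_nonneg z)).trans_lt hz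
      have hker := (hasSum_add_one_mul_geometric_of_norm_lt_one hx).mul_left (f w)
      rw [mul_one_div] at hker
      exact hker.congr_fun fun n => by ring
  have hterm : ∀ n : ℕ, ∫ w in ball (0 : ℂ) r, ((n : ℂ) + 1) * z ^ n * (f w * conj w ^ n)
      = π * r ^ 2 * (p.coeff n * (z * r ^ 2) ^ n) := fun n => by
    rw [integral_const_mul, hp.integral_ball_mul_conj_pow hr n]
    field_simp
    ring
  have hzr2 : z * (r : ℂ) ^ 2 ∈ eball 0 R := by
    refine mem_eball_zero_of_norm_le ?_ hr
    rw [norm_mul, norm_pow, Complex.norm_real, Real.norm_of_nonneg r.coe_nonneg]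
    nlinarith [r.coe_nonneg, norm_nonneg z]
  simp only [hterm] at hsum
  exact hsum.unique ((hp.hasSum_coeff_mul_pow hzr2).mul_left _)

end HasFPowerSeriesOnBall

theorem DifferentiableOn.integral_ball_div_one_sub_mul_conj_sq {f : ℂ → ℂ}
    (hf : DifferentiableOn ℂ f (ball 0 1)) {r : ℝ} (hr0 : 0 ≤ r) (hr1 : r < 1) {z : ℂ}
    (hz : ‖z‖ * r < 1) :
    ∫ w in ball (0 : ℂ) r, f w / (1 - z * conj w) ^ 2 = π * r ^ 2 * f (z * r ^ 2) := by
  lift r to ℝ≥0 using hr0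
  obtain ⟨R, hrR, hR1⟩ := exists_between (show r < 1 by exact_mod_cast hr1)
  have hp := (hf.mono (closedBall_subset_ball (by exact_mod_cast hR1))).hasFPowerSeriesOnBall
    (zero_le.trans_lt hrR)
  exact hp.integral_ball_div_one_sub_mul_conj_sq (by exact_mod_cast hrR) hz

theorem integrableOn_ball_div_one_sub_mul_conj_sq {f : ℂ → ℂ} (hf : IntegrableOn f (ball 0 1))
    {z : ℂ} (hz : ‖z‖ < 1) :
    IntegrableOn (fun w => f w / (1 - z * conj w) ^ 2) (ball (0 : ℂ) 1) := by
  have hbound : ∀ w ∈ ball (0 : ℂ) 1, ‖((1 - z * conj w) ^ 2)⁻¹‖ ≤ ((1 - ‖z‖) ^ 2)⁻¹ := by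
    intro w hw
    have hzw : ‖z * conj w‖ ≤ ‖z‖ := by
      rw [norm_mul, RCLike.norm_conj]
      exact mul_le_of_le_one_right (norm_nonneg z) (mem_ball_zero_iff.1 hw).le
    have hden : 1 - ‖z‖ ≤ ‖1 - z * conj w‖ := by
      linarith [norm_sub_norm_le (1 : ℂ) (z * conj w), norm_one (α := ℂ)]
    rw [norm_inv, norm_pow]
    gcongr
  simp only [div_eq_mul_inv]
  exact hf.mul_bdd
    (by fun_prop : Measurable fun w : ℂ => ((1 - z * conj w) ^ 2)⁻¹).aestronglyMeasurable
    ((ae_restrict_iff' measurableSet_ball).2 (ae_of_all _ hbound))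

/-- Reproducing property of the Bergman kernel of the unit disc: a square-integrable
holomorphic function on the disc satisfies
`f(z) = π⁻¹ ∫_D f(w) / (1 − z·conj w)² dA(w)`. -/
theorem bergman_reproducing_disc (f : ℂ → ℂ)
    (hf : DifferentiableOn ℂ f (ball (0 : ℂ) 1))
    (hL2 : IntegrableOn (fun w => ‖f w‖ ^ 2) (ball (0 : ℂ) 1) volume)
    (z : ℂ) (hz : z ∈ ball (0 : ℂ) 1) :
    f z = (1 / Real.pi : ℂ) *
      ∫ w in ball (0 : ℂ) 1, f w / (1 - z * (starRingEnd ℂ) w) ^ 2 := by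
  have hz1 : ‖z‖ < 1 := mem_ball_zero_iff.1 hz
  have hfL1 : IntegrableOn f (ball (0 : ℂ) 1) := by
    have : IsFiniteMeasure (volume.restrict (ball (0 : ℂ) 1)) :=
      isFiniteMeasure_restrict.2 measure_ball_lt_top.ne
    exact ((memLp_two_iff_integrable_sq_norm (hf.continuousOn.aestronglyMeasurable
      measurableSet_ball)).2 hL2).integrable one_le_two
  have hdisc : ∀ r ∈ Ioo (0 : ℝ) 1,
      π * r ^ 2 * f (z * r ^ 2) = ∫ w in ball (0 : ℂ) r, f w / (1 - z * conj w) ^ 2 :=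
    fun r hr => (hf.integral_ball_div_one_sub_mul_conj_sq hr.1.le hr.2
      (mul_lt_one_of_nonneg_of_lt_one_left (norm_nonneg z) hz1 hr.2.le)).symm
  have hfz : ContinuousAt (fun r : ℝ => f (z * (r : ℂ) ^ 2)) 1 := by
    refine ContinuousAt.comp (g := f) ?_ (by fun_prop)
    simpa using (hf.differentiableAt (isOpen_ball.mem_nhds hz)).continuousAt
  have hrhs : Tendsto (fun r : ℝ => (π : ℂ) * r ^ 2 * f (z * r ^ 2)) (𝓝[<] 1) (𝓝 (π * f z)) := by
    have : ContinuousAt (fun r : ℝ => (π : ℂ) * r ^ 2 * f (z * r ^ 2)) 1 :=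
      (continuousAt_const.mul (continuous_ofReal.continuousAt.pow 2)).mul hfz
    simpa using this.tendsto.mono_left nhdsWithin_le_nhds
  have hlim := tendsto_nhds_unique
    (hrhs.congr' (eventually_of_mem (Ioo_mem_nhdsLT zero_lt_one) hdisc))
    (tendsto_setIntegral_ball_nhdsLT (integrableOn_ball_div_one_sub_mul_conj_sq hfL1 hz1))
  rw [← hlim]
  field_simp
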